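/- The function g is strictly increasing on the interval (20/21, 1). -/

import Mathlib

/-- The lower-bound function `g` of Theorem II.1 (base-2 logarithms; since
`Real.logb 2 0 = 0`, terms of the form `0 · log₂ 0` vanish as intended). -/
noncomputable def g (r : ℝ) : ℝ :=
  (1/64) * (2*(1-r) * Real.logb 2 (1280*(1-r)/(43*r+20))
    + (63*r/10) * Real.logb 2 (64*r/(43*r+20))
    + 18*(1-r) * Real.logb 2 (640*(1-r)/(11*r+20))
    + (279*r/10) * Real.logb 2 (32*r/(11*r+20))
    + 6*(1-r) * Real.logb 2 (1280*(1-r)/(r+60))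
    + (61*r/10) * Real.logb 2 (64*r/(r+60))
    + 20*(1-r) * Real.logb 2 (64*(1-r)/(4-r))
    + 15*r * Real.logb 2 (16*r/(5*(4-r)))
    + 18*(1-r) * Real.logb 2 (640*(1-r)/(60-31*r))
    + (87*r/10) * Real.logb 2 (32*r/(60-31*r)))

/-! Expanding the base-2 logarithms, `g r · log 2` is an affine function of `r` plus a
combination of `x log x` evaluated at `1 - r`, `r` and five further affine functions of `r`.
Its derivative vanishes at `r = 20/21`. Comparing every logarithm in the derivative with its
value at `20/21` through `log x - log y ≤ (x - y) / y`, the term `log r - log (1 - r)` gains at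
least `22 (r - 20/21)`, while the other five lose less than `(r - 20/21) / 3`. -/

open Real Set

lemma HasDerivAt.mul_log {u : ℝ → ℝ} {a r : ℝ} (hu : HasDerivAt u a r) (hr : u r ≠ 0) :
    HasDerivAt (fun x => u x * Real.log (u x)) (a * (Real.log (u r) + 1)) r := by
  have h := hu.mul (hu.log hr)
  rwa [mul_div_cancel₀ a hr, ← mul_add_one] at h

lemma hasDerivAt_affine (a b r : ℝ) : HasDerivAt (fun x => a * x + b) a r := by
  simpa using ((hasDerivAt_id r).const_mul a).add_const b

lemma log_eq_of_eq_two_pow_mul_five_pow {x : ℝ} (k j : ℕ) (hx : x = 2 ^ k * 5 ^ j) :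
    log x = k * log 2 + j * log 5 := by
  rw [hx, log_mul (by positivity) (by positivity), log_pow, log_pow]

lemma log_sub_log_le_div {x y : ℝ} (hx : 0 < x) (hy : 0 < y) :
    log x - log y ≤ (x - y) / y := by
  rw [← log_div hx.ne' hy.ne', sub_div, div_self hy.ne']
  exact log_le_sub_one_of_pos (div_pos hx hy)

noncomputable def gLn (r : ℝ) : ℝ :=
  (1 - r) * log (1 - r) + r * log r
    + (436 * log 2 + 44 * log 5) / 64 - (593 * log 2 + 295 * log 5) / 320 * r
    - 1 / 640 * ((43 * r + 20) * log (43 * r + 20) + 9 * ((11 * r + 20) * log (11 * r + 20))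
        + (r + 60) * log (r + 60) + 50 * ((4 - r) * log (4 - r))
        + 3 * ((60 - 31 * r) * log (60 - 31 * r)))

noncomputable def gLnDeriv (r : ℝ) : ℝ :=
  log r - log (1 - r) - (593 * log 2 + 295 * log 5) / 320
    - 1 / 640 * (43 * log (43 * r + 20) + 99 * log (11 * r + 20)
        + log (r + 60) - 50 * log (4 - r) - 93 * log (60 - 31 * r))

lemma g_eq_gLn_div_log_two {r : ℝ} (h0 : 0 < r) (h1 : r < 1) : g r = gLn r / log 2 := by
  have h16 := log_eq_of_eq_two_pow_mul_five_pow 4 0 (x := 16) (by norm_num)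
  have h32 := log_eq_of_eq_two_pow_mul_five_pow 5 0 (x := 32) (by norm_num)
  have h64 := log_eq_of_eq_two_pow_mul_five_pow 6 0 (x := 64) (by norm_num)
  have h640 := log_eq_of_eq_two_pow_mul_five_pow 7 1 (x := 640) (by norm_num)
  have h1280 := log_eq_of_eq_two_pow_mul_five_pow 8 1 (x := 1280) (by norm_num)
  have hs : 0 < 1 - r := by linarith
  have h4 : 0 < 4 - r := by linarith
  have h60 : 0 < 60 - 31 * r := by linarith
  simp (disch := positivity) only [g, logb, log_div, log_mul]
  rw [h16, h32, h64, h640, h1280]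
  simp only [gLn]
  push_cast
  ring

lemma hasDerivAt_gLn {r : ℝ} (h0 : 0 < r) (h1 : r < 1) : HasDerivAt gLn (gLnDeriv r) r := by
  have hφ (a b : ℝ) (h : 0 < a * r + b) := (hasDerivAt_affine a b r).mul_log h.ne'
  have h := (((hφ (-1) 1 (by linarith)).add (hφ 1 0 (by linarith))).sub
    (hasDerivAt_affine ((593 * log 2 + 295 * log 5) / 320) 0 r)).sub
    ((((((hφ 43 20 (by linarith)).add ((hφ 11 20 (by linarith)).const_mul 9)).add
      (hφ 1 60 (by linarith))).add ((hφ (-1) 4 (by linarith)).const_mul 50)).add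
      ((hφ (-31) 60 (by linarith)).const_mul 3)).const_mul (1 / 640))
  refine ((h.add_const ((436 * log 2 + 44 * log 5) / 64)).congr_of_eventuallyEq
    (.of_forall fun x => ?_)).congr_deriv ?_
  · simp only [gLn, Pi.add_apply, Pi.sub_apply]; ring_nf
  · simp only [gLnDeriv]; ring_nf

lemma gLnDeriv_twenty_div_twentyone : gLnDeriv (20 / 21) = 0 := by
  have h20 := log_eq_of_eq_two_pow_mul_five_pow 2 1 (x := 20) (by norm_num)
  have h64 := log_eq_of_eq_two_pow_mul_five_pow 6 0 (x := 64) (by norm_num)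
  have h640 := log_eq_of_eq_two_pow_mul_five_pow 7 1 (x := 640) (by norm_num)
  have h1280 := log_eq_of_eq_two_pow_mul_five_pow 8 1 (x := 1280) (by norm_num)
  norm_num [gLnDeriv, log_div, h20, h64, h640, h1280]
  ring

lemma gLnDeriv_pos {r : ℝ} (h0 : 20 / 21 < r) (h1 : r < 1) : 0 < gLnDeriv r := by
  have hr : 0 < r := by linarith
  have b1 : log (20 / 21) - log r ≤ 20 / 21 - r :=
    (log_sub_log_le_div (by norm_num) hr).trans <| by rw [div_le_iff₀ hr]; nlinarith
  have b2 := log_sub_log_le_div (x := 1 - r) (y := 1 - 20 / 21) (by linarith) (by norm_num)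
  have b3 := log_sub_log_le_div (x := 43 * r + 20) (y := 43 * (20 / 21) + 20)
    (by linarith) (by norm_num)
  have b4 := log_sub_log_le_div (x := 11 * r + 20) (y := 11 * (20 / 21) + 20)
    (by linarith) (by norm_num)
  have b5 := log_sub_log_le_div (x := r + 60) (y := 20 / 21 + 60) (by linarith) (by norm_num)
  have b6 : log (4 - 20 / 21) - log (4 - r) ≤ (4 - 20 / 21 - (4 - r)) / 3 :=
    (log_sub_log_le_div (by norm_num) (by linarith)).trans <|
      div_le_div_of_nonneg_left (by linarith) (by norm_num) (by linarith)
  have b7 : log (60 - 31 * (20 / 21)) - log (60 - 31 * r)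
      ≤ (60 - 31 * (20 / 21) - (60 - 31 * r)) / 29 :=
    (log_sub_log_le_div (by norm_num) (by linarith)).trans <|
      div_le_div_of_nonneg_left (by linarith) (by norm_num) (by linarith)
  have hcrit := gLnDeriv_twenty_div_twentyone
  unfold gLnDeriv at hcrit ⊢
  norm_num at b2 b3 b4 b5 b6 b7 hcrit ⊢
  linarith

lemma strictMonoOn_gLn : StrictMonoOn gLn (Ioo (20 / 21) 1) := by
  have hD (x : ℝ) (hx : x ∈ Ioo (20 / 21 : ℝ) 1) : HasDerivAt gLn (gLnDeriv x) x :=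
    hasDerivAt_gLn (by linarith [hx.1]) hx.2
  refine strictMonoOn_of_hasDerivWithinAt_pos (f' := gLnDeriv) (convex_Ioo _ _)
    (fun x hx => (hD x hx).continuousAt.continuousWithinAt) (fun x hx => ?_) (fun x hx => ?_)
  all_goals rw [interior_Ioo] at hx
  · exact (hD x hx).hasDerivWithinAt
  · exact gLnDeriv_pos hx.1 hx.2

/-- `g` is strictly increasing on `(20/21, 1)`. -/
theorem g_strictMonoOn : StrictMonoOn g (Set.Ioo ((20 : ℝ) / 21) 1) := by
  intro x hx y hy hxy
  rw [g_eq_gLn_div_log_two (by linarith [hx.1]) hx.2,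
    g_eq_gLn_div_log_two (by linarith [hy.1]) hy.2]
  exact div_lt_div_of_pos_right (strictMonoOn_gLn hx hy hxy) (log_pos one_lt_two)
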